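/- Let l, T > 0, N, j₀ ∈ ℕ with N ≥ 2, h = l/N, τ = T/j₀, grid points x_i = ih and t_j = jτ. Let 0 < α < 1 be constant, let c₁ > 0, and for each time level j let coefficients a_i^{j+1/2} (1 ≤ i ≤ N) satisfy a_i^{j+1/2} ≥ c₁, d_i^{j+1/2} ≥ 0 (1 ≤ i ≤ N−1), and let φ_i^{j+1/2} be given (1 ≤ i ≤ N−1). Suppose 1/(3 − 2^{1−α}) ≤ σ ≤ 1 and y_i^j solves Δ_{0t_j}^{α} y_i = (Λ(σ y^{j+1} + (1−σ)y^j))_i + φ_i^{j+1/2} for 1 ≤ i ≤ N−1 and 0 ≤ j ≤ j₀−1, with y_0^j = y_N^j = 0 and y_i^0 = u₀(x_i). Then for every 0 ≤ j ≤ j₀−1: (1/Γ(2−α)) Σ_{j'=0}^{j} (t_{j−j'+1}^{1−α} − t_{j−j'}^{1−α}) ‖y^{j'+1}‖₀² + c₁ Σ_{j'=0}^{j} ‖σ y_x̄^{j'+1} + (1−σ) y_x̄^{j'}‖₀'² · τ ≤ (l²/(2c₁)) Σ_{j'=0}^{j} ‖φ^{j'}‖₀² · τ + (t_{j+1}^{1−α}/Γ(2−α))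 ‖u₀‖₀². -/

import Mathlib

/-!
Energy method: test the scheme with `v = σ y^{j+1} + (1 - σ) y^j` in the inner product of `‖·‖₀`.
In time, Alikhanov's inequality `v · Δ^α y ≥ ½ Δ^α (y²)` holds because the L1 weights
`w_m = t_{m+1}^{1-α} - t_m^{1-α}` are nonnegative and decreasing (concavity of `t ↦ t^{1-α}`) and
satisfy `σ² w₁ ≤ (2σ - 1) w₀`, which is exactly the condition `σ ≥ 1/(3 - 2^{1-α})`.
In space, summation by parts gives `-(Λv, v) ≥ c₁ ‖v_x̄‖₀'²`, and the source term is absorbed by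
Young's inequality together with the discrete Poincaré inequality `‖v‖₀² ≤ l²/2 ‖v_x̄‖₀'²`.
Summing over the time levels, the Caputo sums telescope, leaving `t_{j+1}^{1-α}/Γ(2-α) ‖y⁰‖₀²`.
-/

/-- The discrete analogue of the Caputo fractional derivative of order `α`
on the uniform grid `t_j = jτ`:
`Δ_{0t_j}^α y = (1/Γ(2-α)) Σ_{s=0}^{j} (t_{j-s+1}^{1-α} − t_{j-s}^{1-α}) (y^{s+1} − y^s)/τ`. -/
noncomputable def dCaputo (α τ : ℝ) (y : ℕ → ℝ) (j : ℕ) : ℝ :=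
  (1 / Real.Gamma (2 - α)) *
    ∑ s ∈ Finset.range (j + 1),
      (((((j : ℕ) - s + 1 : ℕ) : ℝ) * τ) ^ (1 - α) -
        ((((j : ℕ) - s : ℕ) : ℝ) * τ) ^ (1 - α)) * (y (s + 1) - y s) / τ

open Finset

theorem Monotone.sum_mul_sub_succ_add_nonneg {b G : ℕ → ℝ} (hb : Monotone b) (hb0 : 0 ≤ b 0)
    (hG : ∀ s, 0 ≤ G s) (n : ℕ) :
    0 ≤ ∑ s ∈ range (n + 1), b s * (G s - G (s + 1)) + b n * G (n + 1) := by
  induction n with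
  | zero => simpa [mul_sub] using mul_nonneg hb0 (hG 0)
  | succ n ih =>
    have hstep : 0 ≤ (b (n + 1) - b n) * G (n + 1) :=
      mul_nonneg (sub_nonneg.2 (hb n.le_succ)) (hG _)
    rw [sum_range_succ]
    linarith

theorem alikhanov_inequality {w z : ℕ → ℝ} {σ : ℝ} (hw : Antitone w) (hw0 : ∀ m, 0 ≤ w m)
    (hσ : σ ^ 2 * w 1 ≤ (2 * σ - 1) * w 0) (j : ℕ) :
    1 / 2 * ∑ s ∈ range (j + 1), w (j - s) * (z (s + 1) ^ 2 - z s ^ 2) ≤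
      ∑ s ∈ range (j + 1), w (j - s) * (z (s + 1) - z s) * (σ * z (j + 1) + (1 - σ) * z j) := by
  set v := σ * z (j + 1) + (1 - σ) * z j
  -- With `G s = (v - z s)² / 2` the difference of the two sides is `∑ w (j - s) (G s - G (s + 1))`.
  set G : ℕ → ℝ := fun s => (v - z s) ^ 2 / 2
  have hdiff : ∑ s ∈ range (j + 1), w (j - s) * (z (s + 1) - z s) * v -
      1 / 2 * ∑ s ∈ range (j + 1), w (j - s) * (z (s + 1) ^ 2 - z s ^ 2) =
      ∑ s ∈ range (j + 1), w (j - s) * (G s - G (s + 1)) := by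
    rw [mul_sum, ← sum_sub_distrib]
    exact sum_congr rfl fun s _ => by ring
  have hlast : G j - G (j + 1) = (2 * σ - 1) * (z (j + 1) - z j) ^ 2 / 2 := by
    simp only [G, v]; ring
  have hw1 : 0 ≤ (2 * σ - 1) * w 0 := (mul_nonneg (sq_nonneg σ) (hw0 1)).trans hσ
  rw [← sub_nonneg, hdiff]
  rcases j with _ | j
  · simp only [zero_add, range_one, sum_singleton, Nat.sub_self, hlast]
    nlinarith [mul_nonneg hw1 (sq_nonneg (z 1 - z 0))]
  · have hb : Monotone fun s => w (j + 1 - s) := hw.comp fun _ _ h => Nat.sub_le_sub_left h _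
    have habel := hb.sum_mul_sub_succ_add_nonneg (G := G) (hw0 _) (fun s => by positivity) j
    have hGj : G (j + 1) = σ ^ 2 * (z (j + 2) - z (j + 1)) ^ 2 / 2 := by
      simp only [G, v]; ring
    rw [sum_range_succ, hlast]
    simp only [Nat.add_sub_cancel_left, Nat.sub_self, hGj] at habel ⊢
    nlinarith [mul_le_mul_of_nonneg_right hσ (sq_nonneg (z (j + 2) - z (j + 1)))]

-- `t_{m+1}^{1-α} - t_m^{1-α}` with `t_m = mτ`
noncomputable def caputoWeight (α τ : ℝ) (m : ℕ) : ℝ :=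
  (((m + 1 : ℕ) : ℝ) * τ) ^ (1 - α) - ((m : ℝ) * τ) ^ (1 - α)

section caputoWeight

variable {α τ : ℝ}

theorem caputoWeight_nonneg (hτ : 0 ≤ τ) (hα : α ≤ 1) (m : ℕ) : 0 ≤ caputoWeight α τ m := by
  rw [caputoWeight, sub_nonneg]
  gcongr
  linarith

theorem caputoWeight_antitone (hτ : 0 ≤ τ) (hα0 : 0 ≤ α) (hα1 : α ≤ 1) :
    Antitone (caputoWeight α τ) := by
  refine antitone_nat_of_succ_le fun m => ?_
  -- concavity of `t ↦ t ^ (1 - α)` at the midpoint `t_{m+1}` of `t_m` and `t_{m+2}`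
  have hconc := (Real.concaveOn_rpow (p := 1 - α) (by linarith) (by linarith)).2
    (Set.mem_Ici.2 (by positivity : (0 : ℝ) ≤ m * τ))
    (Set.mem_Ici.2 (by positivity : (0 : ℝ) ≤ (m + 2) * τ))
    (by norm_num : (0 : ℝ) ≤ 1 / 2) (by norm_num : (0 : ℝ) ≤ 1 / 2) (by norm_num)
  have hmid : 1 / 2 * ((m : ℝ) * τ) + 1 / 2 * ((m + 2) * τ) = (m + 1) * τ := by ring
  simp only [smul_eq_mul, hmid] at hconc
  simp only [caputoWeight]
  push_cast
  rw [show ((m : ℝ) + 1 + 1) * τ = (m + 2) * τ by ring]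
  linarith

theorem caputoWeight_zero (hα : α < 1) : caputoWeight α τ 0 = τ ^ (1 - α) := by
  simp [caputoWeight, Real.zero_rpow (by linarith : 1 - α ≠ 0)]

theorem caputoWeight_one (hτ : 0 ≤ τ) :
    caputoWeight α τ 1 = ((2 : ℝ) ^ ((1 : ℝ) - α) - 1) * τ ^ (1 - α) := by
  simp only [caputoWeight, Nat.reduceAdd, Nat.cast_ofNat, Nat.cast_one, one_mul,
    Real.mul_rpow zero_le_two hτ]
  ring

theorem sum_range_caputoWeight (hα : α < 1) (n : ℕ) :
    ∑ m ∈ range n, caputoWeight α τ m = ((n : ℝ) * τ) ^ (1 - α) := by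
  simp only [caputoWeight]
  rw [sum_range_sub (fun k : ℕ => ((k : ℝ) * τ) ^ (1 - α))]
  simp [Real.zero_rpow (by linarith : 1 - α ≠ 0)]

theorem sq_mul_le_two_mul_sub_one {p σ : ℝ} (hp1 : 1 ≤ p) (hp3 : p < 3)
    (hσ1 : 1 / (3 - p) ≤ σ) (hσ2 : σ ≤ 1) : σ ^ 2 * (p - 1) ≤ 2 * σ - 1 := by
  have hσp : 1 ≤ σ * (3 - p) := by rwa [div_le_iff₀ (by linarith)] at hσ1
  have hσ0 : 0 ≤ σ := by nlinarith
  nlinarith [mul_nonneg (mul_nonneg hσ0 (sub_nonneg.2 hσ2)) (sub_nonneg.2 hp1)]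

theorem sq_mul_caputoWeight_one_le {σ : ℝ} (hτ : 0 ≤ τ) (hα0 : 0 ≤ α) (hα1 : α < 1)
    (hσ1 : 1 / (3 - (2 : ℝ) ^ ((1 : ℝ) - α)) ≤ σ) (hσ2 : σ ≤ 1) :
    σ ^ 2 * caputoWeight α τ 1 ≤ (2 * σ - 1) * caputoWeight α τ 0 := by
  have hp1 : 1 ≤ (2 : ℝ) ^ ((1 : ℝ) - α) := Real.one_le_rpow one_le_two (by linarith)
  have hp2 : (2 : ℝ) ^ ((1 : ℝ) - α) ≤ 2 := by
    simpa using Real.rpow_le_rpow_of_exponent_le one_le_two (by linarith : 1 - α ≤ 1)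
  rw [caputoWeight_one hτ, caputoWeight_zero hα1, ← mul_assoc]
  exact mul_le_mul_of_nonneg_right (sq_mul_le_two_mul_sub_one hp1 (by linarith) hσ1 hσ2)
    (by positivity)

theorem sum_caputoWeight_mul_sub (hα : α < 2) (hτ : τ ≠ 0) (z : ℕ → ℝ) (j : ℕ) :
    ∑ s ∈ range (j + 1), caputoWeight α τ (j - s) * (z (s + 1) - z s) =
      Real.Gamma (2 - α) * τ * dCaputo α τ z j := by
  have hΓ : Real.Gamma (2 - α) ≠ 0 := (Real.Gamma_pos_of_pos (by linarith)).ne'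
  rw [dCaputo, mul_sum, mul_sum]
  exact sum_congr rfl fun s _ => by rw [caputoWeight]; field_simp

theorem alikhanov_inequality_dCaputo {σ : ℝ} (hτ : 0 < τ) (hα0 : 0 ≤ α) (hα1 : α < 1)
    (hσ1 : 1 / (3 - (2 : ℝ) ^ ((1 : ℝ) - α)) ≤ σ) (hσ2 : σ ≤ 1) (z : ℕ → ℝ) (j : ℕ) :
    1 / 2 * ∑ s ∈ range (j + 1), caputoWeight α τ (j - s) * (z (s + 1) ^ 2 - z s ^ 2) ≤
      Real.Gamma (2 - α) * τ * dCaputo α τ z j * (σ * z (j + 1) + (1 - σ) * z j) := by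
  have := alikhanov_inequality (z := z) (caputoWeight_antitone hτ.le hα0 hα1.le)
    (caputoWeight_nonneg hτ.le hα1.le) (sq_mul_caputoWeight_one_le hτ.le hα0 hα1 hσ1 hσ2) j
  rwa [← sum_mul, sum_caputoWeight_mul_sub (by linarith) hτ.ne'] at this

end caputoWeight

theorem sum_range_sum_mul_sub (w g : ℕ → ℝ) (m : ℕ) :
    ∑ j ∈ range (m + 1), ∑ s ∈ range (j + 1), w (j - s) * (g (s + 1) - g s) =
      ∑ s ∈ range (m + 1), w (m - s) * g (s + 1) - (∑ k ∈ range (m + 1), w k) * g 0 := by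
  induction m with
  | zero => simp [mul_sub]
  | succ m ih =>
    have hshift : ∑ s ∈ range (m + 2), w (m + 1 - s) * g s =
        ∑ s ∈ range (m + 1), w (m - s) * g (s + 1) + w (m + 1) * g 0 := by
      rw [sum_range_succ']
      simp
    rw [sum_range_succ, ih, sum_range_succ w (m + 1)]
    simp only [mul_sub, sum_sub_distrib, hshift]
    ring

theorem sum_Icc_one_eq_sum_range {M : Type*} [AddCommMonoid M] (f : ℕ → M) (N : ℕ) :
    ∑ i ∈ Icc 1 N, f i = ∑ k ∈ range N, f (k + 1) := by
  rw [← Ico_add_one_right_eq_Icc, sum_Ico_eq_sum_range]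
  simp [add_comm]

theorem sum_mul_sub_add_sum_sub_mul (v A : ℕ → ℝ) (M : ℕ) :
    ∑ k ∈ range M, v (k + 1) * (A (k + 1) - A k) + ∑ k ∈ range (M + 1), (v (k + 1) - v k) * A k =
      v (M + 1) * A M - v 0 * A 0 := by
  induction M with
  | zero => simp [sub_mul]
  | succ M ih =>
    rw [sum_range_succ, sum_range_succ _ (M + 1)]
    linear_combination ih

-- `‖v‖₀²` and `‖v‖₀'²`
noncomputable def normSq₀ (h : ℝ) (N : ℕ) (v : ℕ → ℝ) : ℝ := ∑ i ∈ Icc 1 (N - 1), h * v i ^ 2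

noncomputable def normSq₀' (h : ℝ) (N : ℕ) (v : ℕ → ℝ) : ℝ := ∑ i ∈ Icc 1 N, h * v i ^ 2

noncomputable def bdiff (h : ℝ) (v : ℕ → ℝ) (i : ℕ) : ℝ := (v i - v (i - 1)) / h

-- `(Λ v)_i` with coefficients `a_i`, `d_i` of one time level
noncomputable def diffOp (h : ℝ) (a d v : ℕ → ℝ) (i : ℕ) : ℝ :=
  (a (i + 1) * (v (i + 1) - v i) / h - a i * (v i - v (i - 1)) / h) / h - d i * v i

def weightedLevel (σ : ℝ) (y : ℕ → ℕ → ℝ) (j i : ℕ) : ℝ := σ * y i (j + 1) + (1 - σ) * y i j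

section grid

variable {h : ℝ} {N : ℕ} {v : ℕ → ℝ}

theorem sq_le_mul_sum_sq_sub (hv0 : v 0 = 0) {i : ℕ} (hi : i ≤ N) :
    v i ^ 2 ≤ i * ∑ m ∈ range N, (v (m + 1) - v m) ^ 2 := by
  calc v i ^ 2 = (∑ m ∈ range i, (v (m + 1) - v m)) ^ 2 := by rw [sum_range_sub, hv0, sub_zero]
    _ ≤ i * ∑ m ∈ range i, (v (m + 1) - v m) ^ 2 := by
      simpa using sq_sum_le_card_mul_sum_sq (s := range i) (f := fun m => v (m + 1) - v m)
    _ ≤ i * ∑ m ∈ range N, (v (m + 1) - v m) ^ 2 := by gcongr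

theorem sum_Icc_natCast_le_sq_div_two (N : ℕ) : ∑ i ∈ Icc 1 (N - 1), (i : ℝ) ≤ N ^ 2 / 2 := by
  have hgauss : ∀ n : ℕ, ∑ i ∈ range n, (i : ℝ) ≤ n ^ 2 / 2 := by
    intro n
    induction n with
    | zero => simp
    | succ n ih => rw [sum_range_succ]; push_cast; nlinarith
  refine le_trans (sum_le_sum_of_subset_of_nonneg ?_ fun _ _ _ => by positivity) (hgauss N)
  intro i hi
  rw [mem_Icc] at hi
  exact mem_range.2 (by omega)

theorem normSq₀'_bdiff (hh : h ≠ 0) :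
    normSq₀' h N (bdiff h v) = (∑ m ∈ range N, (v (m + 1) - v m) ^ 2) / h := by
  rw [normSq₀', sum_Icc_one_eq_sum_range, sum_div]
  exact sum_congr rfl fun m _ => by simp only [bdiff, Nat.add_sub_cancel]; field_simp

theorem normSq₀_le_sq_mul_normSq₀'_bdiff (hh : 0 < h) (hv0 : v 0 = 0) :
    normSq₀ h N v ≤ (N * h) ^ 2 / 2 * normSq₀' h N (bdiff h v) := by
  rw [normSq₀'_bdiff hh.ne']
  set S := ∑ m ∈ range N, (v (m + 1) - v m) ^ 2
  have hS : 0 ≤ S := sum_nonneg fun _ _ => sq_nonneg _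
  calc normSq₀ h N v ≤ ∑ i ∈ Icc 1 (N - 1), h * (i * S) := by
        refine sum_le_sum fun i hi => ?_
        gcongr
        exact sq_le_mul_sum_sq_sub hv0 (by rw [mem_Icc] at hi; omega)
    _ = h * S * ∑ i ∈ Icc 1 (N - 1), (i : ℝ) := by
        rw [mul_sum]; exact sum_congr rfl fun _ _ => by ring
    _ ≤ h * S * (N ^ 2 / 2) := by gcongr; exact sum_Icc_natCast_le_sq_div_two N
    _ = (N * h) ^ 2 / 2 * (S / h) := by field_simp

theorem sum_mul_le_normSq₀ (hh : 0 ≤ h) {ε : ℝ} (hε : 0 < ε) (φ : ℕ → ℝ) :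
    ∑ i ∈ Icc 1 (N - 1), h * (v i * φ i) ≤ ε * normSq₀ h N v + 1 / (4 * ε) * normSq₀ h N φ := by
  rw [normSq₀, normSq₀, mul_sum, mul_sum, ← sum_add_distrib]
  refine sum_le_sum fun i _ => ?_
  have hyoung : v i * φ i ≤ ε * v i ^ 2 + 1 / (4 * ε) * φ i ^ 2 := by
    rw [← sub_nonneg]
    have hsq : ε * v i ^ 2 + 1 / (4 * ε) * φ i ^ 2 - v i * φ i =
        (2 * ε * v i - φ i) ^ 2 / (4 * ε) := by
      field_simp; ring
    rw [hsq]; positivity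
  calc h * (v i * φ i) ≤ h * (ε * v i ^ 2 + 1 / (4 * ε) * φ i ^ 2) := by gcongr
    _ = _ := by ring

variable {a d : ℕ → ℝ}

theorem sum_mul_diffOp (hh : h ≠ 0) (hN : 1 ≤ N) (hv0 : v 0 = 0) (hvN : v N = 0) :
    ∑ i ∈ Icc 1 (N - 1), h * (v i * diffOp h a d v i) =
      -∑ i ∈ Icc 1 N, h * (a i * bdiff h v i ^ 2) - ∑ i ∈ Icc 1 (N - 1), h * (d i * v i ^ 2) := by
  set A : ℕ → ℝ := fun k => a (k + 1) * (v (k + 1) - v k)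
  have hparts := sum_mul_sub_add_sum_sub_mul v A (N - 1)
  rw [Nat.sub_add_cancel hN, hvN, hv0] at hparts
  have hflux : ∑ i ∈ Icc 1 (N - 1), h * (v i * diffOp h a d v i) =
      (∑ k ∈ range (N - 1), v (k + 1) * (A (k + 1) - A k)) / h -
        ∑ i ∈ Icc 1 (N - 1), h * (d i * v i ^ 2) := by
    rw [sum_Icc_one_eq_sum_range, sum_Icc_one_eq_sum_range, sum_div, ← sum_sub_distrib]
    exact sum_congr rfl fun k _ => by simp only [diffOp, A, Nat.add_sub_cancel]; field_simp
  have hgrad : ∑ i ∈ Icc 1 N, h * (a i * bdiff h v i ^ 2) =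
      (∑ k ∈ range N, (v (k + 1) - v k) * A k) / h := by
    rw [sum_Icc_one_eq_sum_range, sum_div]
    exact sum_congr rfl fun k _ => by simp only [bdiff, A, Nat.add_sub_cancel]; field_simp
  have hsum : ∑ k ∈ range (N - 1), v (k + 1) * (A (k + 1) - A k) =
      -∑ k ∈ range N, (v (k + 1) - v k) * A k := by linarith
  rw [hflux, hgrad, hsum, neg_div]

theorem sum_mul_diffOp_le {c : ℝ} (hh : 0 < h) (hN : 1 ≤ N) (hv0 : v 0 = 0) (hvN : v N = 0)
    (ha : ∀ i, 1 ≤ i → i ≤ N → c ≤ a i) (hd : ∀ i, 1 ≤ i → i ≤ N - 1 → 0 ≤ d i) :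
    ∑ i ∈ Icc 1 (N - 1), h * (v i * diffOp h a d v i) ≤ -(c * normSq₀' h N (bdiff h v)) := by
  rw [sum_mul_diffOp hh.ne' hN hv0 hvN, normSq₀', mul_sum]
  have hgrad : ∑ i ∈ Icc 1 N, c * (h * bdiff h v i ^ 2) ≤
      ∑ i ∈ Icc 1 N, h * (a i * bdiff h v i ^ 2) := by
    refine sum_le_sum fun i hi => ?_
    obtain ⟨hi1, hi2⟩ := mem_Icc.1 hi
    have := mul_le_mul_of_nonneg_right (ha i hi1 hi2) (mul_nonneg hh.le (sq_nonneg (bdiff h v i)))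
    linarith
  have hreact : 0 ≤ ∑ i ∈ Icc 1 (N - 1), h * (d i * v i ^ 2) := by
    refine sum_nonneg fun i hi => ?_
    obtain ⟨hi1, hi2⟩ := mem_Icc.1 hi
    have := hd i hi1 hi2
    positivity
  linarith

theorem sum_mul_diffOp_add_le {c : ℝ} (hh : 0 < h) (hN : 1 ≤ N) (hc : 0 < c) (hv0 : v 0 = 0)
    (hvN : v N = 0) (ha : ∀ i, 1 ≤ i → i ≤ N → c ≤ a i) (hd : ∀ i, 1 ≤ i → i ≤ N - 1 → 0 ≤ d i)
    (φ : ℕ → ℝ) :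
    ∑ i ∈ Icc 1 (N - 1), h * (v i * (diffOp h a d v i + φ i)) ≤
      -(c / 2 * normSq₀' h N (bdiff h v)) + (N * h) ^ 2 / (4 * c) * normSq₀ h N φ := by
  have hl : 0 < (N : ℝ) * h := mul_pos (by exact_mod_cast hN) hh
  -- Young's inequality with `ε = c / l²`, then the Poincaré inequality `‖v‖₀² ≤ l²/2 ‖v_x̄‖₀'²`
  have hyoung := sum_mul_le_normSq₀ hh.le (N := N) (ε := c / (N * h) ^ 2) (by positivity) (v := v) φ
  have hpoinc : c / (N * h) ^ 2 * normSq₀ h N v ≤ c / 2 * normSq₀' h N (bdiff h v) := by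
    calc c / (N * h) ^ 2 * normSq₀ h N v
        ≤ c / (N * h) ^ 2 * ((N * h) ^ 2 / 2 * normSq₀' h N (bdiff h v)) := by
          gcongr; exact normSq₀_le_sq_mul_normSq₀'_bdiff hh hv0
      _ = c / 2 * normSq₀' h N (bdiff h v) := by field_simp
  have hε : 1 / (4 * (c / (N * h) ^ 2)) = (N * h) ^ 2 / (4 * c) := by field_simp
  rw [hε] at hyoung
  simp only [mul_add, sum_add_distrib]
  linarith [sum_mul_diffOp_le hh hN hv0 hvN ha hd]

end grid

theorem half_sum_caputoWeight_normSq₀_le {α τ σ h : ℝ} {N : ℕ} (hτ : 0 < τ) (hα0 : 0 ≤ α)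
    (hα1 : α < 1) (hσ1 : 1 / (3 - (2 : ℝ) ^ ((1 : ℝ) - α)) ≤ σ) (hσ2 : σ ≤ 1) (hh : 0 ≤ h)
    (y : ℕ → ℕ → ℝ) (j : ℕ) :
    1 / 2 * ∑ s ∈ range (j + 1), caputoWeight α τ (j - s) *
        (normSq₀ h N (fun i => y i (s + 1)) - normSq₀ h N (fun i => y i s)) ≤
      Real.Gamma (2 - α) * τ *
        ∑ i ∈ Icc 1 (N - 1), h * (weightedLevel σ y j i * dCaputo α τ (fun s => y i s) j) := by
  have hswap : 1 / 2 * ∑ s ∈ range (j + 1), caputoWeight α τ (j - s) *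
        (normSq₀ h N (fun i => y i (s + 1)) - normSq₀ h N (fun i => y i s)) =
      ∑ i ∈ Icc 1 (N - 1), h * (1 / 2 * ∑ s ∈ range (j + 1),
        caputoWeight α τ (j - s) * (y i (s + 1) ^ 2 - y i s ^ 2)) := by
    simp only [normSq₀, ← sum_sub_distrib, mul_sum]
    rw [sum_comm]
    exact sum_congr rfl fun i _ => sum_congr rfl fun s _ => by ring
  rw [hswap, mul_sum]
  refine sum_le_sum fun i _ => ?_
  calc _ ≤ h * (Real.Gamma (2 - α) * τ * dCaputo α τ (fun s => y i s) j *
        (σ * y i (j + 1) + (1 - σ) * y i j)) :=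
        mul_le_mul_of_nonneg_left
          (alikhanov_inequality_dCaputo hτ hα0 hα1 hσ1 hσ2 (fun s => y i s) j) hh
    _ = _ := by rw [weightedLevel]; ring

theorem level_energy_estimate {α τ σ h c : ℝ} {N : ℕ} (hτ : 0 < τ) (hα0 : 0 ≤ α) (hα1 : α < 1)
    (hσ1 : 1 / (3 - (2 : ℝ) ^ ((1 : ℝ) - α)) ≤ σ) (hσ2 : σ ≤ 1) (hh : 0 < h) (hN : 1 ≤ N)
    (hc : 0 < c) {a d φ : ℕ → ℝ} {y : ℕ → ℕ → ℝ} {j : ℕ}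
    (ha : ∀ i, 1 ≤ i → i ≤ N → c ≤ a i) (hd : ∀ i, 1 ≤ i → i ≤ N - 1 → 0 ≤ d i)
    (hscheme : ∀ i, 1 ≤ i → i ≤ N - 1 →
      dCaputo α τ (fun s => y i s) j = diffOp h a d (weightedLevel σ y j) i + φ i)
    (hv0 : weightedLevel σ y j 0 = 0) (hvN : weightedLevel σ y j N = 0) :
    1 / Real.Gamma (2 - α) * ∑ s ∈ range (j + 1), caputoWeight α τ (j - s) *
        (normSq₀ h N (fun i => y i (s + 1)) - normSq₀ h N (fun i => y i s)) +
      c * (normSq₀' h N (bdiff h (weightedLevel σ y j)) * τ) ≤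
      (N * h) ^ 2 / (2 * c) * (normSq₀ h N φ * τ) := by
  set X := ∑ s ∈ range (j + 1), caputoWeight α τ (j - s) *
    (normSq₀ h N (fun i => y i (s + 1)) - normSq₀ h N (fun i => y i s))
  set v := weightedLevel σ y j
  set Γ := Real.Gamma (2 - α)
  have hΓ : 0 < Γ := Real.Gamma_pos_of_pos (by linarith)
  have htime := half_sum_caputoWeight_normSq₀_le hτ hα0 hα1 hσ1 hσ2 hh.le (N := N) y j
  have hscheme' : ∑ i ∈ Icc 1 (N - 1), h * (v i * dCaputo α τ (fun s => y i s) j) =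
      ∑ i ∈ Icc 1 (N - 1), h * (v i * (diffOp h a d v i + φ i)) :=
    sum_congr rfl fun i hi => by
      obtain ⟨hi1, hi2⟩ := mem_Icc.1 hi
      rw [hscheme i hi1 hi2]
  have hspace := sum_mul_diffOp_add_le hh hN hc hv0 hvN ha hd φ
  rw [← hscheme'] at hspace
  have hX : X ≤ Γ * ((N * h) ^ 2 / (2 * c) * (normSq₀ h N φ * τ) -
      c * (normSq₀' h N (bdiff h v) * τ)) := by
    calc X ≤ 2 * (Γ * τ) * ∑ i ∈ Icc 1 (N - 1), h * (v i * dCaputo α τ (fun s => y i s) j) := by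
          linarith
      _ ≤ 2 * (Γ * τ) * (-(c / 2 * normSq₀' h N (bdiff h v)) +
            (N * h) ^ 2 / (4 * c) * normSq₀ h N φ) := by gcongr
      _ = _ := by field_simp; ring
  rw [one_div_mul_eq_div]
  have := (div_le_iff₀' hΓ).2 hX
  linarith

theorem dirichlet_scheme_apriori_estimate_const_order_general
    (l T c₁ σ : ℝ) (N j₀ : ℕ) (hN : 2 ≤ N)
    (hl : 0 < l) (hT : 0 < T) (hc₁ : 0 < c₁)
    (h τ : ℝ) (hh : h = l / N) (hτ : τ = T / j₀)
    (α : ℝ) (hα0 : 0 < α) (hα1 : α < 1)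
    (a d φ : ℕ → ℕ → ℝ)
    (ha : ∀ j < j₀, ∀ i, 1 ≤ i → i ≤ N → c₁ ≤ a i j)
    (hd : ∀ j < j₀, ∀ i, 1 ≤ i → i ≤ N - 1 → 0 ≤ d i j)
    (hσ1 : 1 / (3 - (2:ℝ) ^ ((1:ℝ) - α)) ≤ σ) (hσ2 : σ ≤ 1)
    (y : ℕ → ℕ → ℝ) (u₀ : ℝ → ℝ)
    -- the difference scheme (19):
    (hscheme : ∀ j < j₀, ∀ i, 1 ≤ i → i ≤ N - 1 →
      dCaputo α τ (fun s => y i s) j =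
        ((a (i + 1) j * ((σ * y (i + 1) (j + 1) + (1 - σ) * y (i + 1) j) -
            (σ * y i (j + 1) + (1 - σ) * y i j)) / h -
          a i j * ((σ * y i (j + 1) + (1 - σ) * y i j) -
            (σ * y (i - 1) (j + 1) + (1 - σ) * y (i - 1) j)) / h) / h -
          d i j * (σ * y i (j + 1) + (1 - σ) * y i j)) + φ i j)
    -- boundary conditions (20):
    (hbc : ∀ j ≤ j₀, y 0 j = 0 ∧ y N j = 0)
    -- initial condition (21):
    (hic : ∀ i ≤ N, y i 0 = u₀ (i * h)) :
    ∀ j < j₀,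
      (1 / Real.Gamma (2 - α)) * (∑ j' ∈ Finset.range (j + 1),
        (((((j : ℕ) - j' + 1 : ℕ) : ℝ) * τ) ^ (1 - α) -
          ((((j : ℕ) - j' : ℕ) : ℝ) * τ) ^ (1 - α)) *
          (∑ i ∈ Finset.Icc 1 (N - 1), h * (y i (j' + 1)) ^ 2)) +
      c₁ * ∑ j' ∈ Finset.range (j + 1),
        (∑ i ∈ Finset.Icc 1 N, h *
          (((σ * y i (j' + 1) + (1 - σ) * y i j') -
            (σ * y (i - 1) (j' + 1) + (1 - σ) * y (i - 1) j')) / h) ^ 2) * τ ≤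
      l ^ 2 / (2 * c₁) * ∑ j' ∈ Finset.range (j + 1),
        (∑ i ∈ Finset.Icc 1 (N - 1), h * (φ i j') ^ 2) * τ +
      ((((j + 1 : ℕ) : ℝ) * τ) ^ (1 - α) / Real.Gamma (2 - α)) *
        (∑ i ∈ Finset.Icc 1 (N - 1), h * (u₀ (i * h)) ^ 2) := by
  intro j hj
  have hh0 : 0 < h := by rw [hh]; exact div_pos hl (by exact_mod_cast (by omega : 0 < N))
  have hτ0 : 0 < τ := by rw [hτ]; exact div_pos hT (by exact_mod_cast (by omega : 0 < j₀))
  have hNh : (N : ℝ) * h = l := by rw [hh]; field_simp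
  have hsum := sum_le_sum fun j' (hmem : j' ∈ range (j + 1)) =>
    have hj' : j' < j₀ := by rw [mem_range] at hmem; omega
    level_energy_estimate hτ0 hα0.le hα1 hσ1 hσ2 hh0 (by omega) hc₁ (ha j' hj') (hd j' hj')
      (hscheme j' hj') (by simp [weightedLevel, (hbc j' hj'.le).1, (hbc (j' + 1) hj').1])
      (by simp [weightedLevel, (hbc j' hj'.le).2, (hbc (j' + 1) hj').2])
  have hinit : normSq₀ h N (fun i => y i 0) = normSq₀ h N (fun i => u₀ (i * h)) :=
    sum_congr rfl fun i hi => by dsimp only; rw [hic i (by rw [mem_Icc] at hi; omega)]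
  have htel := sum_range_sum_mul_sub (caputoWeight α τ) (fun s => normSq₀ h N fun i => y i s) j
  rw [sum_add_distrib, ← mul_sum, ← mul_sum, ← mul_sum, htel,
    sum_range_caputoWeight hα1, hinit, hNh] at hsum
  simp only [normSq₀, normSq₀', bdiff, weightedLevel, caputoWeight] at hsum
  linear_combination hsum

/-- A priori estimate (31) for the weighted difference scheme (19)–(21) for the
Dirichlet problem with constant fractional order `α`, valid for
`1/(3 − 2^{1−α}) ≤ σ ≤ 1`.  Here `y i j ≈ u(x_i, t_j)`, `h = l/N`, `τ = T/j₀`. -/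
theorem dirichlet_scheme_apriori_estimate_const_order
    (l T c₁ σ : ℝ) (N j₀ : ℕ) (hN : 2 ≤ N) (hj₀ : 0 < j₀)
    (hl : 0 < l) (hT : 0 < T) (hc₁ : 0 < c₁)
    (h τ : ℝ) (hh : h = l / N) (hτ : τ = T / j₀)
    (α : ℝ) (hα0 : 0 < α) (hα1 : α < 1)
    (a d φ : ℕ → ℕ → ℝ)
    (ha : ∀ j < j₀, ∀ i, 1 ≤ i → i ≤ N → c₁ ≤ a i j)
    (hd : ∀ j < j₀, ∀ i, 1 ≤ i → i ≤ N - 1 → 0 ≤ d i j)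
    (hσ1 : 1 / (3 - (2:ℝ) ^ ((1:ℝ) - α)) ≤ σ) (hσ2 : σ ≤ 1)
    (y : ℕ → ℕ → ℝ) (u₀ : ℝ → ℝ)
    -- the difference scheme (19):
    (hscheme : ∀ j < j₀, ∀ i, 1 ≤ i → i ≤ N - 1 →
      dCaputo α τ (fun s => y i s) j =
        ((a (i + 1) j * ((σ * y (i + 1) (j + 1) + (1 - σ) * y (i + 1) j) -
            (σ * y i (j + 1) + (1 - σ) * y i j)) / h -
          a i j * ((σ * y i (j + 1) + (1 - σ) * y i j) -
            (σ * y (i - 1) (j + 1) + (1 - σ) * y (i - 1) j)) / h) / h -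
          d i j * (σ * y i (j + 1) + (1 - σ) * y i j)) + φ i j)
    -- boundary conditions (20):
    (hbc : ∀ j ≤ j₀, y 0 j = 0 ∧ y N j = 0)
    -- initial condition (21):
    (hic : ∀ i ≤ N, y i 0 = u₀ (i * h)) :
    ∀ j < j₀,
      (1 / Real.Gamma (2 - α)) * (∑ j' ∈ Finset.range (j + 1),
        (((((j : ℕ) - j' + 1 : ℕ) : ℝ) * τ) ^ (1 - α) -
          ((((j : ℕ) - j' : ℕ) : ℝ) * τ) ^ (1 - α)) *
          (∑ i ∈ Finset.Icc 1 (N - 1), h * (y i (j' + 1)) ^ 2)) +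
      c₁ * ∑ j' ∈ Finset.range (j + 1),
        (∑ i ∈ Finset.Icc 1 N, h *
          (((σ * y i (j' + 1) + (1 - σ) * y i j') -
            (σ * y (i - 1) (j' + 1) + (1 - σ) * y (i - 1) j')) / h) ^ 2) * τ ≤
      l ^ 2 / (2 * c₁) * ∑ j' ∈ Finset.range (j + 1),
        (∑ i ∈ Finset.Icc 1 (N - 1), h * (φ i j') ^ 2) * τ +
      ((((j + 1 : ℕ) : ℝ) * τ) ^ (1 - α) / Real.Gamma (2 - α)) *
        (∑ i ∈ Finset.Icc 1 (N - 1), h * (u₀ (i * h)) ^ 2) :=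
  dirichlet_scheme_apriori_estimate_const_order_general l T c₁ σ N j₀ hN hl hT hc₁ h τ hh hτ α hα0
    hα1 a d φ ha hd hσ1 hσ2 y u₀ hscheme hbc hic
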